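/- arXiv:1503.05765 — 2 statements merged into one kernel-verified Lean document; each statement's English description precedes it below -/
import Mathlib

section
/- The boxicity of a graph G equals the maximum of the boxicities of its connected components. -/
open SimpleGraph

/-- A graph is an interval graph if it is the intersection graph of closed
intervals of the real line. -/
def IsIntervalGraph {V : Type*} (G : SimpleGraph V) : Prop :=
  ∃ I : V → Set ℝ, (∀ v, ∃ a b : ℝ, I v = Set.Icc a b) ∧
    ∀ u v : V, u ≠ v → (G.Adj u v ↔ (I u ∩ I v).Nonempty)

/-- `G` is the intersection of `k` interval graphs on the same vertex set. -/
def HasBoxicityLE {V : Type*} (G : SimpleGraph V) (k : ℕ) : Prop :=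
  ∃ f : Fin k → SimpleGraph V, (∀ i, IsIntervalGraph (f i)) ∧
    ∀ u v : V, G.Adj u v ↔ ∀ i, (f i).Adj u v

/-- The boxicity of `G`: the least `k` such that `G` is the intersection of
`k` interval graphs on its vertex set. -/
noncomputable def boxicity {V : Type*} (G : SimpleGraph V) : ℕ :=
  sInf {k | HasBoxicityLE G k}

/-!
Restricting the interval graphs of a representation of `G` to a component shows that components
have boxicity at most that of `G`. Conversely, pad the representations of all components to the same
length `m` with complete graphs, push the intervals of the component numbered `n` into the window
`(n, n + 1)` by the order embedding `x ↦ n + sigmoid x`, and take unions: intervals of different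
components are then disjoint, so no edge between components appears. The infima defining boxicity
are attained because a finite graph is the intersection of the complete graphs minus one non-edge.
-/

open Set

section

variable {V W β : Type*}

theorem StrictMono.Icc_inter_Icc_nonempty_iff {α γ : Type*} [LinearOrder α] [LinearOrder γ]
    {g : α → γ} (hg : StrictMono g) {a b a' b' : α} :
    (Icc (g a) (g b) ∩ Icc (g a') (g b')).Nonempty ↔ (Icc a b ∩ Icc a' b').Nonempty := by
  simp only [Icc_inter_Icc, nonempty_Icc, ← hg.monotone.map_max, ← hg.monotone.map_min,
    hg.le_iff_le]

noncomputable def window (n : ℕ) (x : ℝ) : ℝ := n + Real.sigmoid x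

theorem window_strictMono (n : ℕ) : StrictMono (window n) :=
  fun _ _ h => add_lt_add_right (Real.sigmoid_strictMono h) _

theorem floor_eq_of_mem_Icc_window {n : ℕ} {a b x : ℝ}
    (hx : x ∈ Icc (window n a) (window n b)) : ⌊x⌋₊ = n := by
  obtain ⟨hax, hxb⟩ := hx
  have := Real.sigmoid_pos a
  have := Real.sigmoid_lt_one b
  unfold window at hax hxb
  rw [Nat.floor_eq_iff (by linarith)]
  exact ⟨by linarith, by linarith⟩

theorem isIntervalGraph_top : IsIntervalGraph (⊤ : SimpleGraph V) :=
  ⟨fun _ => Icc 0 0, fun _ => ⟨0, 0, rfl⟩, fun u v huv => by simp [huv]⟩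

theorem isIntervalGraph_top_deleteEdges_singleton (x y : V) :
    IsIntervalGraph ((⊤ : SimpleGraph V).deleteEdges {s(x, y)}) := by
  classical
  refine ⟨fun v => if v = x then Icc 0 0 else if v = y then Icc 1 1 else Icc 0 1,
    fun v => by dsimp only; split_ifs <;> exact ⟨_, _, rfl⟩, fun u v huv => ?_⟩
  simp only [deleteEdges_adj, top_adj, mem_singleton_iff, Sym2.eq_iff]
  split_ifs <;> simp_all

theorem IsIntervalGraph.comap {H : SimpleGraph V} (hH : IsIntervalGraph H) (f : W ↪ V) :
    IsIntervalGraph (H.comap f) :=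
  let ⟨I, hI, hadj⟩ := hH
  ⟨I ∘ f, fun w => hI (f w), fun _ _ huv => hadj _ _ (f.injective.ne huv)⟩

def fibreSum (p : V → β) (H : ∀ b, SimpleGraph {v | p v = b}) : SimpleGraph V where
  Adj u v := ∃ b, ∃ (hu : p u = b) (hv : p v = b), (H b).Adj ⟨u, hu⟩ ⟨v, hv⟩
  symm := ⟨fun _ _ ⟨b, hu, hv, h⟩ => ⟨b, hv, hu, h.symm⟩⟩
  loopless := ⟨fun _ ⟨b, _, _, h⟩ => (H b).loopless.irrefl _ h⟩

section fibreSum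

variable {p : V → β} {H : ∀ b, SimpleGraph {v | p v = b}} {u v : V}

theorem fibreSum_adj_of_eq {b : β} (hu : p u = b) (hv : p v = b) :
    (fibreSum p H).Adj u v ↔ (H b).Adj ⟨u, hu⟩ ⟨v, hv⟩ := by
  subst hu
  exact ⟨fun ⟨_, rfl, _, h⟩ => h, fun h => ⟨_, rfl, hv, h⟩⟩

theorem eq_of_fibreSum_adj (h : (fibreSum p H).Adj u v) : p u = p v :=
  let ⟨_, hu, hv, _⟩ := h
  hu.trans hv.symm

theorem fibreSum_induce {G : SimpleGraph V} (hp : ∀ u v, G.Adj u v → p u = p v) :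
    fibreSum p (fun b => G.induce {v | p v = b}) = G := by
  ext u v
  exact ⟨fun ⟨_, _, _, h⟩ => h, fun h => ⟨_, rfl, (hp u v h).symm, h⟩⟩

theorem IsIntervalGraph.fibreSum [Countable β] (h : ∀ b, IsIntervalGraph (H b)) :
    IsIntervalGraph (fibreSum p H) := by
  obtain ⟨e, he⟩ := Countable.exists_injective_nat β
  choose I hI hadj using h
  choose a c hac using hI
  let J : V → Set ℝ := fun v =>
    Icc (window (e (p v)) (a (p v) ⟨v, rfl⟩)) (window (e (p v)) (c (p v) ⟨v, rfl⟩))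
  have hJ : ∀ v b (hv : p v = b),
      J v = Icc (window (e b) (a b ⟨v, hv⟩)) (window (e b) (c b ⟨v, hv⟩)) := by
    rintro v b rfl
    rfl
  refine ⟨J, fun v => ⟨_, _, rfl⟩, fun u v huv => ?_⟩
  by_cases hp : p u = p v
  · rw [fibreSum_adj_of_eq hp rfl, hadj _ _ _ fun h => huv (congrArg Subtype.val h), hac, hac,
      hJ u _ hp, hJ v _ rfl, (window_strictMono _).Icc_inter_Icc_nonempty_iff]
  · refine iff_of_false (fun h => hp (eq_of_fibreSum_adj h)) ?_
    rintro ⟨x, hxu, hxv⟩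
    exact hp (he ((floor_eq_of_mem_Icc_window hxu).symm.trans (floor_eq_of_mem_Icc_window hxv)))

end fibreSum

section boxicity

variable {G : SimpleGraph V} {k m : ℕ}

theorem hasBoxicityLE_of_forall_adj_iff {ι : Type*} [Fintype ι] (f : ι → SimpleGraph V)
    (hf : ∀ i, IsIntervalGraph (f i)) (h : ∀ u v, G.Adj u v ↔ ∀ i, (f i).Adj u v) :
    HasBoxicityLE G (Fintype.card ι) :=
  ⟨f ∘ (Fintype.equivFin ι).symm, fun _ => hf _,
    fun u v => (h u v).trans (Fintype.equivFin ι).symm.forall_congr_right.symm⟩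

theorem hasBoxicityLE_zero_iff : HasBoxicityLE G 0 ↔ IsEmpty V :=
  ⟨fun ⟨_, _, h⟩ => ⟨fun v => G.irrefl ((h v v).2 finZeroElim)⟩,
    fun _ => ⟨finZeroElim, finZeroElim, fun u => isEmptyElim u⟩⟩

theorem HasBoxicityLE.mono (h : HasBoxicityLE G k) (hkm : k ≤ m) : HasBoxicityLE G m := by
  obtain ⟨f, hf, hadj⟩ := h
  have := hasBoxicityLE_of_forall_adj_iff (G := G) (Sum.elim f fun _ : Fin (m - k) => ⊤)
    (Sum.forall.2 ⟨hf, fun _ => isIntervalGraph_top⟩) fun u v => by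
      simp only [Sum.forall, Sum.elim_inl, Sum.elim_inr, top_adj, ← hadj]
      exact ⟨fun h => ⟨h, fun _ => h.ne⟩, And.left⟩
  simpa [Nat.add_sub_cancel' hkm] using this

theorem HasBoxicityLE.comap (h : HasBoxicityLE G k) (f : W ↪ V) : HasBoxicityLE (G.comap f) k :=
  let ⟨F, hF, hadj⟩ := h
  ⟨fun i => (F i).comap f, fun i => (hF i).comap f, fun u v => hadj (f u) (f v)⟩

theorem HasBoxicityLE.fibreSum [Countable β] {p : V → β} {H : ∀ b, SimpleGraph {v | p v = b}}
    (h : ∀ b, HasBoxicityLE (H b) k) : HasBoxicityLE (fibreSum p H) k := by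
  cases k with
  | zero =>
    exact hasBoxicityLE_zero_iff.2
      ⟨fun v => (hasBoxicityLE_zero_iff.1 (h (p v))).false ⟨v, rfl⟩⟩
  | succ k =>
    choose F hF hadj using h
    refine ⟨fun i => _root_.fibreSum p (F · i), fun i => .fibreSum fun b => hF b i,
      fun u v => ?_⟩
    by_cases hp : p u = p v
    · simp only [fibreSum_adj_of_eq hp rfl, hadj]
    · exact iff_of_false (fun h => hp (eq_of_fibreSum_adj h))
        fun hall => hp (eq_of_fibreSum_adj (hall 0))

theorem HasBoxicityLE.of_fibres [Countable β] {p : V → β}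
    (hp : ∀ u v, G.Adj u v → p u = p v) (h : ∀ b, HasBoxicityLE (G.induce {v | p v = b}) k) :
    HasBoxicityLE G k :=
  fibreSum_induce hp ▸ HasBoxicityLE.fibreSum h

theorem exists_hasBoxicityLE [Finite V] (G : SimpleGraph V) : ∃ k, HasBoxicityLE G k := by
  classical
  have := Fintype.ofFinite V
  refine ⟨_, hasBoxicityLE_of_forall_adj_iff (ι := {p : V × V // ¬ G.Adj p.1 p.2})
    (fun p => (⊤ : SimpleGraph V).deleteEdges {s(p.1.1, p.1.2)})
    (fun _ => isIntervalGraph_top_deleteEdges_singleton _ _) fun u v => ?_⟩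
  simp only [deleteEdges_adj, top_adj, mem_singleton_iff, Subtype.forall, Prod.forall]
  refine ⟨fun huv x y hxy => ⟨huv.ne, fun h => hxy ?_⟩,
    fun h => not_not.1 fun huv => (h u v huv).2 rfl⟩
  rwa [← G.mem_edgeSet, ← h]

theorem hasBoxicityLE_boxicity [Finite V] (G : SimpleGraph V) : HasBoxicityLE G (boxicity G) :=
  Nat.sInf_mem (exists_hasBoxicityLE G)

theorem boxicity_comap_le [Finite V] (G : SimpleGraph V) (f : W ↪ V) :
    boxicity (G.comap f) ≤ boxicity G :=
  Nat.sInf_le ((hasBoxicityLE_boxicity G).comap f)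

end boxicity

end

/-- The boxicity of a graph is the maximum of the boxicities of its connected
components. -/
theorem boxicity_eq_iSup_components {V : Type*} [Fintype V] (G : SimpleGraph V) :
    boxicity G = ⨆ c : G.ConnectedComponent, boxicity (G.induce c.supp) := by
  refine le_antisymm (Nat.sInf_le ?_) (ciSup_le' fun c => boxicity_comap_le G (.subtype _))
  refine HasBoxicityLE.of_fibres (p := G.connectedComponentMk)
    (fun _ _ h => ConnectedComponent.sound h.reachable) fun c => ?_
  have hbdd := Finite.bddAbove_range fun c : G.ConnectedComponent => boxicity (G.induce c.supp)
  exact (hasBoxicityLE_boxicity (G.induce c.supp)).mono (le_ciSup hbdd c)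
end

section
/- Assume the following two facts: (1) every k-degenerate graph on n ≥ 2 vertices has boxicity at most (k+2)·⌈2e·log n⌉; (2) for any graph G and vertex subset S, if H is obtained from G by deleting all edges inside S, then box(G) ≤ 2·box(H) + box(G[S]); and (3) every graph on N vertices has boxicity at most N/2. Then every connected graph G on n ≥ 2 vertices with m edges satisfies box(G) ≤ (15e+1)·√(m·log n). -/
open SimpleGraph

/-! Split the vertices at the degree threshold `d = √(m / log n)`. Deleting the edges inside
the set `S` of vertices of degree `> d` leaves a `⌊d⌋`-degenerate graph, of boxicity
`O(d log n) = O(√(m log n))`, while the handshake lemma gives `|S| ≤ 2m / d = 2√(m log n)`,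
so `box G[S] ≤ |S| / 2 ≤ √(m log n)`. Connectivity gives `m ≥ n - 1 ≥ log n ≥ log 2`, which
lets the lower-order terms be absorbed into the constant. -/

namespace SimpleGraph
variable {V : Type*} (G : SimpleGraph V)

def IsDegenerate (k : ℕ) : Prop :=
  ∀ s : Finset V, s.Nonempty → ∃ v ∈ s, Nat.card {u : V // u ∈ s ∧ G.Adj v u} ≤ k

lemma isDegenerate_deleteEdges_sym2 [Fintype V] [DecidableRel G.Adj] {S : Set V} {k : ℕ}
    (hS : ∀ v ∉ S, G.degree v ≤ k) : (G.deleteEdges S.sym2).IsDegenerate k := by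
  intro s ⟨v₀, hv₀⟩
  by_cases hs : ∃ v ∈ s, v ∉ S
  · obtain ⟨v, hv, hvS⟩ := hs
    refine ⟨v, hv, le_trans ?_ (hS v hvS)⟩
    rw [← card_neighborSet_eq_degree, ← Nat.card_eq_fintype_card]
    exact Nat.card_mono (Set.toFinite _) fun u hu => (deleteEdges_adj.1 hu.2).1
  · push Not at hs
    refine ⟨v₀, hv₀, ?_⟩
    have : IsEmpty {u : V // u ∈ s ∧ (G.deleteEdges S.sym2).Adj v₀ u} :=
      ⟨fun ⟨u, hu, hadj⟩ =>
        (deleteEdges_adj.1 hadj).2 (Set.mk_mem_sym2_iff.2 ⟨hs v₀ hv₀, hs u hu⟩)⟩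
    rw [Nat.card_of_isEmpty]; exact k.zero_le

open Finset in
lemma card_setOf_lt_degree_mul_le [Fintype V] [DecidableRel G.Adj] (d : ℝ) :
    (Nat.card {v | d < G.degree v} : ℝ) * d ≤ 2 * Nat.card G.edgeSet := by
  classical
  calc (Nat.card {v | d < G.degree v} : ℝ) * d
      = #{v | d < G.degree v} • d := by
        rw [nsmul_eq_mul, Nat.card_eq_card_toFinset, Set.toFinset_ofPred]
    _ ≤ ∑ v ∈ {v | d < G.degree v}, (G.degree v : ℝ) :=
        card_nsmul_le_sum _ _ _ fun v hv => (mem_filter.1 hv).2.le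
    _ ≤ ∑ v, (G.degree v : ℝ) := sum_le_univ_sum_of_nonneg fun _ => by positivity
    _ = 2 * Nat.card G.edgeSet := by
        rw [← Nat.cast_sum, sum_degrees_eq_twice_card_edges, edgeFinset_card,
          Nat.card_eq_fintype_card]; push_cast; ring

end SimpleGraph

section
open Real

lemma two_mul_div_add_two_mul_add_le_mul {e L s : ℝ} (he : 8 / 3 ≤ e) (hL : 2 / 3 ≤ L) (hLs : L ≤ s)
    (hs : 4 / 5 ≤ s) : 2 * ((s / L + 2) * (2 * e * L + 1)) + s ≤ (15 * e + 1) * s := by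
  have hL0 : 0 < L := by linarith
  have hsL : s / L ≤ 3 / 2 * s := by
    rw [div_le_iff₀ hL0]; nlinarith
  have hexp :
      2 * ((s / L + 2) * (2 * e * L + 1)) = 4 * e * s + 2 * (s / L) + 8 * e * L + 4 := by
    field_simp; ring
  rw [hexp]
  -- `2 s / L ≤ 3 s`, `8 e L ≤ 8 e s`, `4 ≤ 5 s`; absorbing `8 s` into `3 e s` needs `e ≥ 8 / 3`.
  nlinarith

lemma two_mul_add_le_mul_sqrt_mul_log {n m b c N : ℝ} (hn : 2 ≤ n) (hnm : n ≤ m + 1)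
    (hb : b ≤ (√(m / log n) + 2) * (2 * exp 1 * log n + 1))
    (hc : c ≤ N / 2) (hN : N * √(m / log n) ≤ 2 * m) :
    2 * b + c ≤ (15 * exp 1 + 1) * √(m * log n) := by
  set L := log n
  set s := √(m * L)
  have hL : 2 / 3 ≤ L := by
    linarith [log_two_gt_d9, log_le_log two_pos hn]
  have hLm : L ≤ m := by linarith [log_le_sub_one_of_pos (by linarith : 0 < n)]
  have hmL : 0 ≤ m * L := by nlinarith
  have hs2 : s ^ 2 = m * L := sq_sqrt hmL
  have hLs : L ≤ s := (le_sqrt (by linarith) hmL).2 (by nlinarith)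
  have hs : 4 / 5 ≤ s := (le_sqrt (by norm_num) hmL).2 (by nlinarith)
  have hd : √(m / L) = s / L := by
    rw [show m / L = m * L / L ^ 2 by field_simp, sqrt_div' _ (sq_nonneg L),
      sqrt_sq (by linarith)]
  have hcs : c ≤ s := by
    rw [hd] at hN
    have : N * s ≤ 2 * s ^ 2 := by
      rw [hs2]; rwa [mul_div_assoc', div_le_iff₀ (by linarith), mul_assoc] at hN
    nlinarith
  rw [hd] at hb
  linarith [two_mul_div_add_two_mul_add_le_mul (e := exp 1) (by linarith [exp_one_gt_d9]) hL hLs hs]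

end

/-- Assuming the degeneracy bound on boxicity, the edge-deletion lemma, and the
`N/2` bound, every connected graph on `n ≥ 2` vertices with `m` edges has
boxicity at most `(15e+1)·√(m·log n)`. -/
theorem boxicity_le_sqrt_edges
    (fact1 : ∀ (W : Type) (_ : Fintype W) (H : SimpleGraph W) (k : ℕ),
      2 ≤ Fintype.card W →
      (∀ s : Finset W, s.Nonempty →
        ∃ v ∈ s, Nat.card {u : W // u ∈ s ∧ H.Adj v u} ≤ k) →
      (boxicity H : ℝ) ≤
        ((k : ℝ) + 2) * ((⌈2 * Real.exp 1 * Real.log (Fintype.card W)⌉ : ℤ) : ℝ))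
    (fact2 : ∀ (W : Type) (_ : Fintype W) (G H : SimpleGraph W) (S : Set W),
      (∀ u v : W, H.Adj u v ↔ G.Adj u v ∧ (u ∉ S ∨ v ∉ S)) →
      boxicity G ≤ 2 * boxicity H + boxicity (G.induce S))
    (fact3 : ∀ (W : Type) (_ : Fintype W) (G : SimpleGraph W),
      (boxicity G : ℝ) ≤ (Fintype.card W : ℝ) / 2)
    {V : Type} [Fintype V] (G : SimpleGraph V) (hconn : G.Connected)
    (hn : 2 ≤ Fintype.card V) :
    (boxicity G : ℝ) ≤ (15 * Real.exp 1 + 1) *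
      Real.sqrt ((Nat.card G.edgeSet : ℝ) * Real.log (Fintype.card V)) := by
  classical
  set d := √((Nat.card G.edgeSet : ℝ) / Real.log (Fintype.card V))
  set S : Set V := {v | d < G.degree v}
  have hH : (G.deleteEdges S.sym2).IsDegenerate ⌊d⌋₊ :=
    G.isDegenerate_deleteEdges_sym2 fun v hv => Nat.le_floor (not_lt.1 hv)
  have hsplit := fact2 V inferInstance G (G.deleteEdges S.sym2) S fun u v => by
    simp only [deleteEdges_adj, Set.mk_mem_sym2_iff, not_and_or]
  have hnm : (Fintype.card V : ℝ) ≤ Nat.card G.edgeSet + 1 := by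
    rw [← Nat.card_eq_fintype_card]
    exact_mod_cast hconn.card_vert_le_card_edgeSet_add_one
  have hS := G.card_setOf_lt_degree_mul_le d
  rw [Nat.card_eq_fintype_card] at hS
  refine (Nat.cast_le.2 hsplit).trans ?_
  push_cast
  refine two_mul_add_le_mul_sqrt_mul_log (by exact_mod_cast hn) hnm
    ((fact1 V inferInstance _ _ hn hH).trans ?_) (fact3 S inferInstance (G.induce S)) hS
  gcongr
  · exact Nat.floor_le (Real.sqrt_nonneg _)
  · exact (Int.ceil_lt_add_one _).le
end
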